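/- arXiv:1303.5999 — 3 statements merged into one kernel-verified Lean document; each statement's English description precedes it below -/
import Mathlib

section
/- For vertex-disjoint graphs G and H, the domination polynomial satisfies D(G ∨ H, x) = ((1+x)^{v(G)} − 1)·((1+x)^{v(H)} − 1) + D(G,x) + D(H,x). -/
/-- `S` dominates `G`: every vertex is in `S` or adjacent to a member of `S`. -/
def Dominates {V : Type*} (G : SimpleGraph V) (S : Set V) : Prop :=
  ∀ v : V, v ∈ S ∨ ∃ u ∈ S, G.Adj u v

/-- number of dominating sets of cardinality `i`. -/
noncomputable def numDom {V : Type*} [Fintype V] (G : SimpleGraph V) (i : ℕ) : ℕ :=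
  Nat.card {S : Finset V // S.card = i ∧ Dominates G ↑S}

/-- the domination polynomial `D(G,x) = Σ_{i=1}^{n} d(G,i) x^i`. -/
noncomputable def domPoly {V : Type*} [Fintype V] (G : SimpleGraph V) : Polynomial ℤ :=
  ∑ i ∈ Finset.Icc 1 (Fintype.card V), (numDom G i : Polynomial ℤ) * Polynomial.X ^ i

/-- the join of two vertex-disjoint graphs. -/
def GJoin {α β : Type*} (G : SimpleGraph α) (H : SimpleGraph β) : SimpleGraph (α ⊕ β) where
  Adj x y := match x, y with
    | Sum.inl a, Sum.inl b => G.Adj a b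
    | Sum.inr a, Sum.inr b => H.Adj a b
    | _, _ => True
  symm := by constructor; rintro (a|a) (b|b) h <;> simp_all [SimpleGraph.adj_comm]
  loopless := by constructor; rintro (a|a) h <;> simp_all

/-- `H_t(a)`: a copy of `K_a` and a copy of `K_{a+t}`, connected by a matching
from `K_a` into `K_{a+t}`. -/
def Hgraph (a t : ℕ) : SimpleGraph (Fin a ⊕ Fin (a + t)) where
  Adj x y := match x, y with
    | Sum.inl i, Sum.inl j => i ≠ j
    | Sum.inr i, Sum.inr j => i ≠ j
    | Sum.inl i, Sum.inr j => (j : ℕ) = (i : ℕ)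
    | Sum.inr i, Sum.inl j => (i : ℕ) = (j : ℕ)
  symm := by constructor; rintro (i|i) (j|j) h <;> simp_all <;> omega
  loopless := by constructor; rintro (i|i) h <;> simp_all

/-!
In the join every vertex of one side is adjacent to every vertex of the other, so a set
`A ⊔ B` dominates `G ∨ H` iff (`A` dominates `G` or `B ≠ ∅`) and (`B` dominates `H` or `A ≠ ∅`).
Hence the nonempty dominating sets of the join are the pairs with both parts nonempty, counted by
`((1+x)^{v(G)} - 1)((1+x)^{v(H)} - 1)`, together with the dominating sets of `G` and of `H`.
-/

open Finset Polynomial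

section

variable {V : Type*} [Fintype V]

open Classical in
theorem domPoly_eq_sum (G : SimpleGraph V) :
    domPoly G = ∑ S : Finset V, if S.Nonempty ∧ Dominates G S then X ^ #S else 0 := by
  rw [← sum_filter, ← sum_fiberwise_of_maps_to (g := card) (t := Icc 1 (Fintype.card V))
    fun S hS => mem_Icc.2 ⟨(mem_filter.1 hS).2.1.card_pos, S.card_le_univ⟩]
  refine sum_congr rfl fun i hi => ?_
  have hfiber : (univ.filter fun S : Finset V => S.Nonempty ∧ Dominates G S).filter
      (fun S => #S = i) = univ.filter fun S : Finset V => #S = i ∧ Dominates G S := by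
    ext S
    simp only [mem_filter, mem_univ, true_and]
    refine ⟨fun ⟨⟨_, hS⟩, hi⟩ => ⟨hi, hS⟩, fun ⟨hi', hS⟩ => ⟨⟨?_, hS⟩, hi'⟩⟩
    exact card_pos.1 (hi' ▸ (mem_Icc.1 hi).1)
  rw [hfiber, sum_congr rfl fun S hS => by rw [(mem_filter.1 hS).2.1], sum_const, nsmul_eq_mul,
    numDom, Nat.card_eq_fintype_card, Fintype.card_subtype]

theorem add_pow_card_sub_one {R : Type*} [CommRing R] (x : R) :
    (1 + x) ^ Fintype.card V - 1 = ∑ S : Finset V, if S.Nonempty then x ^ #S else 0 := by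
  classical
  have hsplit (S : Finset V) :
      x ^ #S = (if S.Nonempty then x ^ #S else 0) + if S = ∅ then 1 else 0 := by
    rcases S.eq_empty_or_nonempty with rfl | hS
    · simp
    · simp [hS, hS.ne_empty]
  rw [add_comm, ← Fintype.sum_pow_mul_eq_add_pow]
  simp only [one_pow, mul_one]
  rw [sum_congr rfl fun S _ => hsplit S, sum_add_distrib, sum_ite_eq', if_pos (mem_univ _),
    add_sub_cancel_right]

end

theorem Finset.sum_finset_sum_eq_sum_disjSum {α β M : Type*} [Fintype α] [Fintype β]
    [AddCommMonoid M] (f : Finset (α ⊕ β) → M) :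
    ∑ S, f S = ∑ A : Finset α, ∑ B : Finset β, f (A.disjSum B) := by
  rw [← Fintype.sum_prod_type']
  exact Fintype.sum_equiv sumEquiv.toEquiv _ _ fun S => congrArg f S.toLeft_disjSum_toRight.symm

theorem dominates_join_iff {α β : Type*} (G : SimpleGraph α) (H : SimpleGraph β)
    (S : Set (α ⊕ β)) :
    Dominates (GJoin G H) S ↔
      (Dominates G (Sum.inl ⁻¹' S) ∨ (Sum.inr ⁻¹' S).Nonempty) ∧
        (Dominates H (Sum.inr ⁻¹' S) ∨ (Sum.inl ⁻¹' S).Nonempty) := by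
  simp only [Dominates, Sum.forall, Sum.exists, Set.mem_preimage, Set.Nonempty, GJoin, and_true,
    ← or_assoc, or_right_comm (b := ∃ a : α, Sum.inl a ∈ S), forall_or_right]

section

variable {α β : Type*} (G : SimpleGraph α) (H : SimpleGraph β)

theorem dominates_join_disjSum_iff (A : Finset α) (B : Finset β) :
    Dominates (GJoin G H) ↑(A.disjSum B) ↔
      (Dominates G ↑A ∨ B.Nonempty) ∧ (Dominates H ↑B ∨ A.Nonempty) := by
  have hl : Sum.inl ⁻¹' (↑(A.disjSum B) : Set (α ⊕ β)) = ↑A := by ext; simp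
  have hr : Sum.inr ⁻¹' (↑(A.disjSum B) : Set (α ⊕ β)) = ↑B := by ext; simp
  rw [dominates_join_iff, hl, hr, coe_nonempty, coe_nonempty]

open Classical in
theorem ite_dominates_join_disjSum {R : Type*} [CommSemiring R] (x : R)
    (A : Finset α) (B : Finset β) :
    (if (A.disjSum B).Nonempty ∧ Dominates (GJoin G H) ↑(A.disjSum B)
      then x ^ #(A.disjSum B) else 0) =
      (if A.Nonempty then x ^ #A else 0) * (if B.Nonempty then x ^ #B else 0) +
        (if A.Nonempty ∧ Dominates G ↑A then x ^ #A else 0) * (if B = ∅ then 1 else 0) +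
        (if A = ∅ then 1 else 0) * (if B.Nonempty ∧ Dominates H ↑B then x ^ #B else 0) := by
  rw [dominates_join_disjSum_iff, card_disjSum, pow_add]
  by_cases hA : A = ∅ <;> by_cases hB : B = ∅ <;> simp [hA, hB, nonempty_iff_ne_empty]

end

/-- `D(G ∨ H, x) = ((1+x)^{v(G)} − 1)((1+x)^{v(H)} − 1) + D(G,x) + D(H,x)`. -/
theorem domPoly_join {α β : Type*} [Fintype α] [Fintype β]
    (G : SimpleGraph α) (H : SimpleGraph β) :
    domPoly (GJoin G H) =
      ((1 + Polynomial.X) ^ Fintype.card α - 1) *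
        ((1 + Polynomial.X) ^ Fintype.card β - 1) + domPoly G + domPoly H := by
  classical
  rw [domPoly_eq_sum, domPoly_eq_sum, domPoly_eq_sum, add_pow_card_sub_one, add_pow_card_sub_one,
    sum_finset_sum_eq_sum_disjSum]
  simp only [ite_dominates_join_disjSum, sum_add_distrib, ← mul_sum, ← sum_mul, sum_ite_eq',
    mem_univ, if_true, mul_one, one_mul]
end

section
/- For a ≥ 1 and t ∈ {0,1}, the complete bipartite graph K(a, a+t) and the graph H_t(a) have the same domination polynomial. -/
/-!
A set meeting both sides dominates K(a, b) and H_t(a) alike, so only the one-sided dominating sets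
differ. For K(a, b) these are the two sides. For H_0(a) they are again the two cliques, while for
H_1(a) they are the clique K_{a+1} and the a vertices of K_{a+1} matched to K_a. In the last case
transposing the left side of K(a, a + 1) with that matched a-set is a size-preserving bijection
between the dominating sets of the two graphs.
-/

open Finset Sum

theorem Finset.card_swap_apply {γ : Type*} [DecidableEq γ] {X Y : Finset γ} (h : X.card = Y.card)
    (S : Finset γ) : (Equiv.swap X Y S).card = S.card := by
  rw [Equiv.swap_apply_def]
  split_ifs with hX hY
  exacts [hX ▸ h.symm, hY ▸ h, rfl]

theorem swap_apply_or_eq_or_eq_iff {γ : Type*} [DecidableEq γ] {P : γ → Prop} {X Y Z S : γ}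
    (hX : ¬P X) (hY : ¬P Y) (hZX : Z ≠ X) (hZY : Z ≠ Y) :
    (P S ∨ S = X ∨ S = Z) ↔
      (P (Equiv.swap X Y S) ∨ Equiv.swap X Y S = Y ∨ Equiv.swap X Y S = Z) := by
  rw [Equiv.swap_apply_eq_iff, Equiv.swap_apply_right, Equiv.swap_apply_eq_iff,
    Equiv.swap_apply_of_ne_of_ne hZX hZY, Equiv.swap_apply_def]
  split_ifs <;> simp_all

theorem Fintype.card_eq_of_finsetEquiv {V W : Type*} [Fintype V] [Fintype W]
    (e : Finset V ≃ Finset W) (he : ∀ S, (e S).card = S.card) : Fintype.card V = Fintype.card W := by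
  refine le_antisymm ?_ ?_
  · simpa [he] using card_le_univ (e univ)
  · simpa [← he] using card_le_univ (e.symm univ)

theorem numDom_eq_of_equiv {V W : Type*} [Fintype V] [Fintype W] {G : SimpleGraph V}
    {H : SimpleGraph W} (e : Finset V ≃ Finset W) (he_card : ∀ S, (e S).card = S.card)
    (he_dom : ∀ S : Finset V, Dominates G S ↔ Dominates H (e S)) (i : ℕ) :
    numDom G i = numDom H i :=
  Nat.card_congr <| e.subtypeEquiv fun S => by rw [he_card, he_dom]

theorem domPoly_eq_of_equiv {V W : Type*} [Fintype V] [Fintype W] {G : SimpleGraph V}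
    {H : SimpleGraph W} (e : Finset V ≃ Finset W) (he_card : ∀ S, (e S).card = S.card)
    (he_dom : ∀ S : Finset V, Dominates G S ↔ Dominates H (e S)) : domPoly G = domPoly H := by
  simp only [domPoly, Fintype.card_eq_of_finsetEquiv e he_card, numDom_eq_of_equiv e he_card he_dom]

section
variable {α β : Type*}

def MeetsBothSides (S : Finset (α ⊕ β)) : Prop :=
  (∃ i, inl i ∈ S) ∧ ∃ j, inr j ∈ S

theorem eq_map_inl_univ_iff [Fintype α] {S : Finset (α ⊕ β)} :
    S = univ.map .inl ↔ (∀ i, inl i ∈ S) ∧ ∀ j, inr j ∉ S := by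
  simp [Finset.ext_iff, Sum.forall]

theorem eq_map_inr_univ_iff [Fintype β] {S : Finset (α ⊕ β)} :
    S = univ.map .inr ↔ (∀ i, inl i ∉ S) ∧ ∀ j, inr j ∈ S := by
  simp [Finset.ext_iff, Sum.forall]

theorem eq_map_castSucc_univ_iff {a : ℕ} {S : Finset (α ⊕ Fin (a + 1))} :
    S = univ.map (Fin.castSuccEmb.trans .inr) ↔
      (∀ i, inl i ∉ S) ∧ (∀ i, inr (Fin.castSucc i) ∈ S) ∧ inr (Fin.last a) ∉ S := by
  simp [Finset.ext_iff, Sum.forall, Fin.forall_fin_succ']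

theorem dominates_completeBipartiteGraph_iff [Fintype α] [Fintype β] [Nonempty α] [Nonempty β]
    {S : Finset (α ⊕ β)} :
    Dominates (completeBipartiteGraph α β) S ↔
      MeetsBothSides S ∨ S = univ.map .inl ∨ S = univ.map .inr := by
  have hdom : Dominates (completeBipartiteGraph α β) S ↔
        ((∀ i, inl i ∈ S) ∨ ∃ j, inr j ∈ S) ∧ ((∀ j, inr j ∈ S) ∨ ∃ i, inl i ∈ S) := by
    simp [Dominates, Sum.forall, Sum.exists, forall_or_right]
  rw [hdom, MeetsBothSides, eq_map_inl_univ_iff, eq_map_inr_univ_iff]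
  by_cases hl : ∃ i, inl i ∈ S <;> by_cases hr : ∃ j, inr j ∈ S <;> simp_all

theorem Hgraph.dominates_of_meetsBothSides {a t : ℕ} {S : Finset (Fin a ⊕ Fin (a + t))}
    (hS : MeetsBothSides S) : Dominates (Hgraph a t) S := by
  obtain ⟨⟨i', hi'⟩, ⟨j', hj'⟩⟩ := hS
  rintro (i | j)
  · rcases eq_or_ne i' i with rfl | hne
    exacts [.inl hi', .inr ⟨_, hi', hne⟩]
  · rcases eq_or_ne j' j with rfl | hne
    exacts [.inl hj', .inr ⟨_, hj', hne⟩]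

theorem Hgraph.exists_inr_mem_of_dominates {a t : ℕ} {S : Finset (Fin a ⊕ Fin (a + t))}
    (hS : Dominates (Hgraph a t) S) (hl : ∀ i, inl i ∉ S) (i : Fin a) :
    ∃ j : Fin (a + t), (j : ℕ) = i ∧ inr j ∈ S := by
  obtain h | ⟨u | j, hu, hadj⟩ := hS (inl i)
  exacts [(hl i h).elim, (hl u hu).elim, ⟨j, hadj, hu⟩]

theorem Hgraph.exists_inl_mem_of_dominates {a t : ℕ} {S : Finset (Fin a ⊕ Fin (a + t))}
    (hS : Dominates (Hgraph a t) S) (hr : ∀ j, inr j ∉ S) (j : Fin (a + t)) :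
    ∃ i : Fin a, (j : ℕ) = i ∧ inl i ∈ S := by
  obtain h | ⟨i | u, hu, hadj⟩ := hS (inr j)
  exacts [(hr j h).elim, ⟨i, hadj, hu⟩, (hr u hu).elim]

theorem Hgraph.dominates_zero_iff {a : ℕ} {S : Finset (Fin a ⊕ Fin (a + 0))} :
    Dominates (Hgraph a 0) S ↔ MeetsBothSides S ∨ S = univ.map .inl ∨ S = univ.map .inr := by
  rw [eq_map_inl_univ_iff, eq_map_inr_univ_iff]
  constructor
  · intro hS
    by_cases hl : ∃ i, inl i ∈ S
    · by_cases hr : ∃ j, inr j ∈ S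
      · exact .inl ⟨hl, hr⟩
      · push Not at hr
        refine .inr (.inl ⟨fun i => ?_, hr⟩)
        obtain ⟨i', hi', hmem⟩ := exists_inl_mem_of_dominates hS hr i
        rwa [← Fin.ext hi'] at hmem
    · push Not at hl
      refine .inr (.inr ⟨hl, fun j => ?_⟩)
      obtain ⟨j', hj', hmem⟩ := exists_inr_mem_of_dominates hS hl j
      rwa [Fin.ext hj'] at hmem
  · rintro (hS | ⟨hl, -⟩ | ⟨-, hr⟩)
    · exact dominates_of_meetsBothSides hS
    · rintro (i | j)
      exacts [.inl (hl i), .inr ⟨inl j, hl j, rfl⟩]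
    · rintro (i | j)
      exacts [.inr ⟨inr i, hr i, rfl⟩, .inl (hr j)]

theorem Hgraph.dominates_one_iff {a : ℕ} (ha : 1 ≤ a) {S : Finset (Fin a ⊕ Fin (a + 1))} :
    Dominates (Hgraph a 1) S ↔
      MeetsBothSides S ∨ S = univ.map (Fin.castSuccEmb.trans .inr) ∨ S = univ.map .inr := by
  rw [eq_map_castSucc_univ_iff, eq_map_inr_univ_iff]
  constructor
  · intro hS
    by_cases hl : ∃ i, inl i ∈ S
    · by_cases hr : ∃ j, inr j ∈ S
      · exact .inl ⟨hl, hr⟩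
      · obtain ⟨i, hi, -⟩ := exists_inl_mem_of_dominates hS (not_exists.1 hr) (Fin.last a)
        simp only [Fin.val_last] at hi
        omega
    · push Not at hl
      have hR' (i : Fin a) : inr (Fin.castSucc i) ∈ S := by
        obtain ⟨j, hj, hmem⟩ := exists_inr_mem_of_dominates hS hl i
        rwa [show j = Fin.castSucc i from Fin.ext hj] at hmem
      by_cases hlast : inr (Fin.last a) ∈ S
      · exact .inr (.inr ⟨hl, Fin.forall_fin_succ'.2 ⟨hR', hlast⟩⟩)
      · exact .inr (.inl ⟨hl, hR', hlast⟩)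
  · have hpartner (i : Fin a) : (Hgraph a 1).Adj (inr (Fin.castSucc i)) (inl i) :=
      Fin.val_castSucc i
    rintro (hS | ⟨-, hR', -⟩ | ⟨-, hR⟩)
    · exact dominates_of_meetsBothSides hS
    · rintro (i | j)
      · exact .inr ⟨_, hR' i, hpartner i⟩
      · induction j using Fin.lastCases with
        | last => exact .inr ⟨_, hR' ⟨0, ha⟩, (Fin.castSucc_lt_last _).ne⟩
        | cast j => exact .inl (hR' j)
    · rintro (i | j)
      exacts [.inr ⟨_, hR _, hpartner i⟩, .inl (hR j)]

end

/-- For `a ≥ 1` and `t ∈ {0,1}`, `D(K(a,a+t),x) = D(H_t(a),x)`. -/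
theorem domPoly_completeBipartite_eq_Hgraph (a t : ℕ) (ha : 1 ≤ a) (ht : t ≤ 1) :
    domPoly (completeBipartiteGraph (Fin a) (Fin (a + t))) =
      domPoly (Hgraph a t) := by
  have : NeZero a := ⟨by omega⟩
  obtain rfl | rfl : t = 0 ∨ t = 1 := by omega
  · exact domPoly_eq_of_equiv (Equiv.refl _) (fun _ => rfl) fun _ =>
      dominates_completeBipartiteGraph_iff.trans Hgraph.dominates_zero_iff.symm
  · let L : Finset (Fin a ⊕ Fin (a + 1)) := univ.map .inl
    let R' : Finset (Fin a ⊕ Fin (a + 1)) := univ.map (Fin.castSuccEmb.trans .inr)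
    refine domPoly_eq_of_equiv (Equiv.swap L R') (card_swap_apply (by simp [L, R'])) fun S => ?_
    rw [dominates_completeBipartiteGraph_iff (S := S), Hgraph.dominates_one_iff ha]
    refine swap_apply_or_eq_or_eq_iff ?_ ?_ ?_ ?_
    · simp [MeetsBothSides]
    · simp [MeetsBothSides, R']
    · simp [Finset.ext_iff]
    · rw [Ne, eq_map_castSucc_univ_iff]
      simp
end

section
/- For r ≥ 2, a ≥ r+2, and 0 ≤ t ≤ ⌊r/2⌋, the graph J_r(a,t) = (⋁_{i=1}^{t} H_0(a)) ∨ K_{r−2t}(a) has the same domination polynomial as K_r(a). -/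
/-- `J_r(a,t)`: the join of `t` disjoint copies of `H_0(a)` (occupying the pairs of
classes `{0,1},…,{2t-2,2t-1}`) with the complete `(r-2t)`-partite graph with classes
of size `a`.  The vertex `(i,x)` is the `x`-th vertex of the `i`-th class. -/
def Jgraph (r a t : ℕ) : SimpleGraph (Fin r × Fin a) where
  Adj x y :=
    if x.1 = y.1 then (x.1 : ℕ) < 2*t ∧ x.2 ≠ y.2
    else if (x.1 : ℕ)/2 = (y.1 : ℕ)/2 ∧ (x.1 : ℕ) < 2*t ∧ (y.1 : ℕ) < 2*t then x.2 = y.2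
    else True
  symm := by
    constructor
    rintro ⟨i,x⟩ ⟨j,y⟩ h
    dsimp at *
    split_ifs at h ⊢ <;> simp_all [eq_comm] <;> omega
  loopless := by constructor; rintro ⟨i,x⟩ h; simp_all

/-!
Call the sets `{i} × Fin a` the classes of `Fin r × Fin a`. In `K_r(a)` and in `J_r(a,t)` alike,
a nonempty vertex set dominates if and only if it meets two classes or contains a whole class.
In `J_r(a,t)` the vertices other than `v` that are not adjacent to `v` all lie in one class: the
class of `v` if it is not paired into a copy of `H_0(a)`, its partner class otherwise. Hence two
vertices from different classes dominate. Conversely, if `S` lies in class `i` and misses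
`(i, y)`, some vertex sees class `i` at most at `(i, y)` and is not dominated: `(i, y)` itself
in `K_r(a)` or in an unpaired class, and its matching partner in a paired class.
-/

open Finset

section Dominates

variable {V W : Type*} {G : SimpleGraph V} {H : SimpleGraph W}

theorem dominates_image_iff (e : G ≃g H) (S : Set V) :
    Dominates H (e '' S) ↔ Dominates G S := by
  refine ⟨fun h v => ?_, fun h w => ?_⟩
  · simpa [e.map_adj_iff] using h (e v)
  · obtain ⟨v, rfl⟩ := e.surjective w
    simpa [e.map_adj_iff] using h v

theorem numDom_congr [Fintype V] [Fintype W] (e : G ≃g H) (i : ℕ) :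
    numDom G i = numDom H i :=
  Nat.card_congr <| (Equiv.finsetCongr e.toEquiv).subtypeEquiv fun S => by
    simp [dominates_image_iff]

theorem domPoly_congr [Fintype V] [Fintype W] (e : G ≃g H) : domPoly G = domPoly H := by
  simp only [domPoly, numDom_congr e, Fintype.card_congr e.toEquiv]

theorem domPoly_eq_of_dominates_iff [Fintype V] {G G' : SimpleGraph V}
    (h : ∀ S : Finset V, S.Nonempty → (Dominates G S ↔ Dominates G' S)) :
    domPoly G = domPoly G' := by
  refine Finset.sum_congr rfl fun i hi => ?_
  congr 2
  refine Nat.card_congr <| Equiv.subtypeEquivRight fun S => and_congr_right fun hS => h S ?_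
  rw [← card_pos, hS]
  exact (mem_Icc.1 hi).1

end Dominates

section Classes

variable {ι α : Type*}

def MeetsTwoClassesOrContainsClass (S : Set (ι × α)) : Prop :=
  (∃ u ∈ S, ∃ w ∈ S, u.1 ≠ w.1) ∨ ∃ i, ∀ x, (i, x) ∈ S

theorem dominates_iff_meetsTwoClassesOrContainsClass {G : SimpleGraph (ι × α)}
    (adj_or_adj : ∀ u w v, u.1 ≠ w.1 → u ≠ v → w ≠ v → G.Adj u v ∨ G.Adj w v)
    (adj_of_snd_eq : ∀ u v, u.1 ≠ v.1 → u.2 = v.2 → G.Adj u v)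
    (exists_sees_class_only_at : ∀ i y, ∃ v, ∀ x, (i, x) = v ∨ G.Adj (i, x) v → x = y)
    {S : Set (ι × α)} (hS : S.Nonempty) :
    Dominates G S ↔ MeetsTwoClassesOrContainsClass S := by
  constructor
  · intro hdom
    unfold MeetsTwoClassesOrContainsClass
    by_contra! ⟨same_class, not_full⟩
    obtain ⟨u, hu⟩ := hS
    obtain ⟨y, hy⟩ := not_full u.1
    obtain ⟨v, hv⟩ := exists_sees_class_only_at u.1 y
    have not_sees_v : ∀ s ∈ S, s = v ∨ G.Adj s v → False := fun s hs hsv => by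
      have hs' : s = (u.1, s.2) := Prod.ext (same_class s hs u hu) rfl
      rw [hs'] at hs hsv
      exact hy (hv s.2 hsv ▸ hs)
    rcases hdom v with hvS | ⟨s, hs, hsv⟩
    exacts [not_sees_v v hvS (.inl rfl), not_sees_v s hs (.inr hsv)]
  · rintro (⟨u, hu, w, hw, huw⟩ | ⟨i, hi⟩) v
    · by_cases hv : v ∈ S
      · exact .inl hv
      rcases adj_or_adj u w v huw (ne_of_mem_of_not_mem hu hv) (ne_of_mem_of_not_mem hw hv)
        with h | h
      exacts [.inr ⟨u, hu, h⟩, .inr ⟨w, hw, h⟩]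
    · by_cases hv : v.1 = i
      · rw [← hv] at hi
        exact .inl (hi v.2)
      · exact .inr ⟨(i, v.2), hi v.2, adj_of_snd_eq _ _ (Ne.symm hv) rfl⟩

theorem dominates_comap_fst_top_iff {S : Set (ι × α)} (hS : S.Nonempty) :
    Dominates (SimpleGraph.comap Prod.fst (⊤ : SimpleGraph ι)) S ↔
      MeetsTwoClassesOrContainsClass S := by
  refine dominates_iff_meetsTwoClassesOrContainsClass (fun u w v huw _ _ => ?_)
    (fun _ _ h _ => h) (fun i y => ⟨(i, y), fun x hx => ?_⟩) hS
  · by_cases huv : u.1 = v.1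
    · exact .inr fun hwv => huw (huv.trans hwv.symm)
    · exact .inl huv
  · simpa using hx

end Classes

section Jgraph

variable {r a t : ℕ}

theorem Jgraph_adj_iff (u v : Fin r × Fin a) :
    (Jgraph r a t).Adj u v ↔
      if u.1 = v.1 then (u.1 : ℕ) < 2 * t ∧ u.2 ≠ v.2
      else (u.1 : ℕ) / 2 = (v.1 : ℕ) / 2 ∧ (u.1 : ℕ) < 2 * t ∧ (v.1 : ℕ) < 2 * t →
        u.2 = v.2 := by
  simp only [Jgraph]
  split_ifs <;> simp_all

theorem Jgraph_adj_of_snd_eq {u v : Fin r × Fin a} (h1 : u.1 ≠ v.1) (h2 : u.2 = v.2) :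
    (Jgraph r a t).Adj u v := by
  simp [Jgraph_adj_iff, h1, h2]

theorem Jgraph_adj_or_adj {u w v : Fin r × Fin a} (huw : u.1 ≠ w.1) (huv : u ≠ v)
    (hwv : w ≠ v) : (Jgraph r a t).Adj u v ∨ (Jgraph r a t).Adj w v := by
  simp only [Jgraph_adj_iff, Prod.ext_iff, Fin.ext_iff, ne_eq] at *
  split_ifs <;> omega

theorem Jgraph_exists_sees_class_only_at (ht : t ≤ r / 2) (i : Fin r) (y : Fin a) :
    ∃ v, ∀ x, (i, x) = v ∨ (Jgraph r a t).Adj (i, x) v → x = y := by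
  by_cases hi : (i : ℕ) < 2 * t
  · -- `2 * (i / 2) + (1 - i % 2)` is the class paired with `i`
    refine ⟨(⟨2 * (i / 2) + (1 - i % 2), by omega⟩, y), fun x hx => ?_⟩
    simp only [Jgraph_adj_iff, Prod.ext_iff, Fin.ext_iff] at hx
    split_ifs at hx <;> omega
  · refine ⟨(i, y), fun x hx => ?_⟩
    simp only [Jgraph_adj_iff, Prod.ext_iff, Fin.ext_iff, ne_eq, ↓reduceIte, true_and]
      at hx ⊢
    omega

theorem dominates_Jgraph_iff (ht : t ≤ r / 2) {S : Set (Fin r × Fin a)} (hS : S.Nonempty) :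
    Dominates (Jgraph r a t) S ↔ MeetsTwoClassesOrContainsClass S :=
  dominates_iff_meetsTwoClassesOrContainsClass (fun _ _ _ => Jgraph_adj_or_adj)
    (fun _ _ => Jgraph_adj_of_snd_eq) (Jgraph_exists_sees_class_only_at ht) hS

end Jgraph

theorem domPoly_Jgraph_general {r a t : ℕ} (ht : t ≤ r / 2) :
    domPoly (Jgraph r a t) =
      domPoly (SimpleGraph.completeMultipartiteGraph fun _ : Fin r => Fin a) := by
  rw [← domPoly_congr (H := SimpleGraph.completeMultipartiteGraph fun _ : Fin r => Fin a)
    SimpleGraph.completeEquipartiteGraph.completeMultipartiteGraph]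
  refine domPoly_eq_of_dominates_iff fun S hS => ?_
  have hS' : (S : Set (Fin r × Fin a)).Nonempty := coe_nonempty.2 hS
  rw [dominates_Jgraph_iff ht hS', dominates_comap_fst_top_iff hS']

/-- For `r ≥ 2`, `a ≥ r+2` and `0 ≤ t ≤ ⌊r/2⌋`, `J_r(a,t)` has the same domination
polynomial as `K_r(a)`. -/
theorem domPoly_Jgraph {r a t : ℕ} (hr : 2 ≤ r) (ha : r + 2 ≤ a) (ht : t ≤ r / 2) :
    domPoly (Jgraph r a t) =
      domPoly (SimpleGraph.completeMultipartiteGraph fun _ : Fin r => Fin a) :=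
  domPoly_Jgraph_general ht
end
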